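/- arXiv:0804.0705 — 2 statements merged into one kernel-verified Lean document; each statement's English description precedes it below -/
import Mathlib

section
/- Let H = {(x₁,x₂) ∈ ℝ² : x₂ > 0} be the open upper half-plane. Then for x = (x₁,x₂) and y = (y₁,y₂) in H, the Funk weak metric is F_H(x,y) = max(log(x₂/y₂), 0). -/
open Classical

/-- The point `a⁺ = R(x,y) ∩ ∂Ω` where the ray from `x` through `y` exits `Ω`.
For an open convex set `Ω` containing `x` and `y ≠ x`, when the ray is not contained
in `Ω`, the supremum below is attained at the unique boundary point on the ray. -/
noncomputable def funkPoint {n : ℕ} (Ω : Set (EuclideanSpace ℝ (Fin n)))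
    (x y : EuclideanSpace ℝ (Fin n)) : EuclideanSpace ℝ (Fin n) :=
  x + (sSup {t : ℝ | x + t • (y - x) ∈ Ω}) • (y - x)

/-- The Funk weak metric of `Ω`:
`F_Ω(x,y) = log (|x - a⁺| / |y - a⁺|)` if `x ≠ y` and the ray `R(x,y)` from `x`
through `y` is not contained in `Ω`, and `F_Ω(x,y) = 0` otherwise. -/
noncomputable def funk {n : ℕ} (Ω : Set (EuclideanSpace ℝ (Fin n)))
    (x y : EuclideanSpace ℝ (Fin n)) : ℝ :=
  if x = y ∨ ∀ t : ℝ, 0 ≤ t → x + t • (y - x) ∈ Ω then 0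
  else Real.log (dist x (funkPoint Ω x y) / dist y (funkPoint Ω x y))

theorem funk_upperHalfPlane (x y : EuclideanSpace ℝ (Fin 2))
    (hx : 0 < x 1) (hy : 0 < y 1) :
    funk {p : EuclideanSpace ℝ (Fin 2) | 0 < p 1} x y =
      max (Real.log (x 1 / y 1)) 0 := by
  have key : ∀ t : ℝ, (x + t • (y - x)) 1 = x 1 + t * (y 1 - x 1) := fun t => by
    simp [PiLp.add_apply, PiLp.smul_apply, PiLp.sub_apply]
  rcases le_or_gt (x 1) (y 1) with h | h
  · rw [funk, if_pos, max_eq_right]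
    · exact Real.log_nonpos (by positivity) (by rw [div_le_one hy]; exact h)
    · right
      intro t ht
      simp only [Set.mem_setOf_eq, key]
      nlinarith
  · set c : ℝ := x 1 - y 1 with hc
    have hcpos : 0 < c := sub_pos.2 h
    set T : ℝ := x 1 / c with hT
    have hTpos : 0 < T := by positivity
    have hT1 : 1 < T := by
      rw [hT, lt_div_iff₀ hcpos]; nlinarith
    have hS : {t : ℝ | x + t • (y - x) ∈ {p : EuclideanSpace ℝ (Fin 2) | 0 < p 1}}
        = Set.Iio T := by
      ext t
      simp only [Set.mem_setOf_eq, key, Set.mem_Iio, hT, lt_div_iff₀ hcpos]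
      constructor <;> intro ht <;> nlinarith
    have hyx : y - x ≠ 0 := by
      intro h0
      have : (y - x) 1 = 0 := by rw [h0]; rfl
      rw [PiLp.sub_apply] at this
      nlinarith
    have hne : x ≠ y := fun h0 => by rw [h0] at h; exact lt_irrefl _ h
    rw [funk, if_neg]
    · rw [funkPoint, hS, csSup_Iio]
      have d1 : dist x (x + T • (y - x)) = T * ‖y - x‖ := by
        rw [dist_self_add_right, norm_smul, Real.norm_eq_abs, abs_of_pos hTpos]
      have d2 : dist y (x + T • (y - x)) = (T - 1) * ‖y - x‖ := by
        rw [dist_eq_norm]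
        have : y - (x + T • (y - x)) = (1 - T) • (y - x) := by
          rw [sub_smul, one_smul]; abel
        rw [this, norm_smul, Real.norm_eq_abs, abs_of_neg (by linarith), neg_sub]
      rw [d1, d2, max_eq_left]
      · congr 1
        have hn : (0:ℝ) < ‖y - x‖ := norm_pos_iff.2 hyx
        have hT2 : T - 1 = y 1 / c := by
          rw [hT]; field_simp; linarith
        rw [mul_div_mul_right _ _ (ne_of_gt hn), hT2, hT]
        rw [div_div_div_cancel_right₀]
        exact ne_of_gt hcpos
      · apply le_of_lt
        apply Real.log_pos
        rw [lt_div_iff₀ hy]; linarith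
    · push_neg
      refine ⟨hne, T, le_of_lt hTpos, ?_⟩
      simp only [Set.mem_setOf_eq, key]
      intro hcon
      have : x 1 + T * (y 1 - x 1) = 0 := by
        rw [hT]; field_simp; rw [hc]; ring
      linarith
end

section
/- Let Ω₁, Ω₂ be open convex subsets of ℝⁿ with nonempty intersection. Then for all x, y ∈ Ω₁ ∩ Ω₂, F_{Ω₁∩Ω₂}(x,y) = max(F_{Ω₁}(x,y), F_{Ω₂}(x,y)). -/
open Classical

/-- The set of parameters `t` with `x + t • (y - x) ∈ Ω`. -/
def funkSet {n : ℕ} (Ω : Set (EuclideanSpace ℝ (Fin n)))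
    (x y : EuclideanSpace ℝ (Fin n)) : Set ℝ := {t : ℝ | x + t • (y - x) ∈ Ω}

section aux

variable {n : ℕ} {Ω : Set (EuclideanSpace ℝ (Fin n))} {x y : EuclideanSpace ℝ (Fin n)}

lemma funkSet_convex (hc : Convex ℝ Ω) : Convex ℝ (funkSet Ω x y) := by
  intro a ha b hb p q hp hq hpq
  have hq' : q = 1 - p := by linarith
  subst hq'
  simp only [funkSet, Set.mem_setOf_eq, smul_eq_mul] at *
  have key : x + (p * a + (1 - p) * b) • (y - x)
      = p • (x + a • (y - x)) + (1 - p) • (x + b • (y - x)) := by module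
  rw [key]
  exact hc ha hb hp hq hpq

lemma funkSet_open (ho : IsOpen Ω) : IsOpen (funkSet Ω x y) := by
  have : Continuous fun t : ℝ => x + t • (y - x) := by continuity
  exact ho.preimage this

lemma funkSet_zero_mem (hx : x ∈ Ω) : (0 : ℝ) ∈ funkSet Ω x y := by
  simp [funkSet, hx]

lemma funkSet_one_mem (hy : y ∈ Ω) : (1 : ℝ) ∈ funkSet Ω x y := by
  simp [funkSet, hy]

lemma funkSet_mem_of_exists (hc : Convex ℝ Ω) (hx : x ∈ Ω) {t : ℝ} (ht : 0 ≤ t)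
    (hex : ∃ s ∈ funkSet Ω x y, t < s) : t ∈ funkSet Ω x y := by
  obtain ⟨s, hs, hts⟩ := hex
  have h0 : (0 : ℝ) ∈ funkSet Ω x y := funkSet_zero_mem hx
  have hseg : t ∈ segment ℝ (0 : ℝ) s := by
    rw [segment_eq_Icc (by linarith : (0:ℝ) ≤ s)]
    exact ⟨ht, hts.le⟩
  exact (funkSet_convex hc).segment_subset h0 hs hseg

lemma funk_ray_iff (hc : Convex ℝ Ω) (hx : x ∈ Ω) :
    (∀ t : ℝ, 0 ≤ t → x + t • (y - x) ∈ Ω) ↔ ¬ BddAbove (funkSet Ω x y) := by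
  constructor
  · intro hall hb
    obtain ⟨b, hbub⟩ := hb
    have h1 : max b 0 + 1 ∈ funkSet Ω x y := hall _ (by positivity)
    have h2 := hbub h1
    have h3 : b ≤ max b 0 := le_max_left _ _
    linarith
  · intro hnb t ht
    have hex : ∃ s ∈ funkSet Ω x y, t < s := by
      by_contra hcon
      push_neg at hcon
      exact hnb ⟨t, fun s hs => hcon s hs⟩
    exact funkSet_mem_of_exists hc hx ht hex

lemma funkSet_mem_of_lt (hc : Convex ℝ Ω) (hx : x ∈ Ω)
    (hb : BddAbove (funkSet Ω x y)) {t : ℝ} (ht : 0 ≤ t)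
    (hlt : t < sSup (funkSet Ω x y)) : t ∈ funkSet Ω x y := by
  refine funkSet_mem_of_exists hc hx ht ?_
  obtain ⟨s, hs, hts⟩ := exists_lt_of_lt_csSup ⟨0, funkSet_zero_mem hx⟩ hlt
  exact ⟨s, hs, hts⟩

lemma one_lt_funkSup (ho : IsOpen Ω) (hy : y ∈ Ω)
    (hb : BddAbove (funkSet Ω x y)) : 1 < sSup (funkSet Ω x y) := by
  obtain ⟨ε, hε, hball⟩ := Metric.isOpen_iff.mp (funkSet_open ho (x := x) (y := y)) 1
    (funkSet_one_mem hy)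
  have hmem : 1 + ε / 2 ∈ funkSet Ω x y := by
    apply hball
    rw [Metric.mem_ball, Real.dist_eq, show (1 + ε / 2 - 1) = ε / 2 by ring,
      abs_of_pos (by linarith)]
    linarith
  have := le_csSup hb hmem
  linarith

lemma funk_eq_log (hc : Convex ℝ Ω) (ho : IsOpen Ω) (hx : x ∈ Ω) (hy : y ∈ Ω)
    (hxy : x ≠ y) (hb : BddAbove (funkSet Ω x y)) :
    funk Ω x y =
      Real.log (sSup (funkSet Ω x y) / (sSup (funkSet Ω x y) - 1)) := by
  have hT : 1 < sSup (funkSet Ω x y) := one_lt_funkSup ho hy hb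
  have hray : ¬ ∀ t : ℝ, 0 ≤ t → x + t • (y - x) ∈ Ω := by
    rw [funk_ray_iff hc hx]; exact not_not_intro hb
  rw [funk, if_neg (not_or.mpr ⟨hxy, hray⟩)]
  set T := sSup (funkSet Ω x y) with hTdef
  have hv : ‖y - x‖ ≠ 0 := by
    simpa [sub_eq_zero] using (Ne.symm hxy)
  have hfp : funkPoint Ω x y = x + T • (y - x) := rfl
  have h1 : dist x (funkPoint Ω x y) = T * ‖y - x‖ := by
    rw [hfp, dist_self_add_right, norm_smul, Real.norm_eq_abs,
      abs_of_pos (by linarith : (0:ℝ) < T)]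
  have h2 : dist y (funkPoint Ω x y) = (T - 1) * ‖y - x‖ := by
    have key : y - (x + T • (y - x)) = (1 - T) • (y - x) := by module
    rw [hfp, dist_eq_norm, key, norm_smul, Real.norm_eq_abs,
      abs_of_nonpos (by linarith : (1:ℝ) - T ≤ 0)]
    ring
  rw [h1, h2, mul_div_mul_right _ _ hv]

lemma funk_zero_of_ray (h : ∀ t : ℝ, 0 ≤ t → x + t • (y - x) ∈ Ω) :
    funk Ω x y = 0 := by
  rw [funk, if_pos (Or.inr h)]

lemma csSup_eq_of_bounds {A : Set ℝ} {m : ℝ} (hm : 0 < m)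
    (hub : ∀ t ∈ A, t ≤ m) (hmem : ∀ t : ℝ, 0 ≤ t → t < m → t ∈ A) :
    sSup A = m := by
  have h0 : (0 : ℝ) ∈ A := hmem 0 le_rfl hm
  have hb : BddAbove A := ⟨m, fun t ht => hub t ht⟩
  refine le_antisymm (csSup_le ⟨0, h0⟩ hub) ?_
  by_contra hcon
  push_neg at hcon
  have h0le : 0 ≤ sSup A := le_csSup hb h0
  have ht : (sSup A + m) / 2 ∈ A := hmem _ (by linarith) (by linarith)
  have := le_csSup hb ht
  linarith

lemma max_log_div (T₁ T₂ : ℝ) (h1 : 1 < T₁) (h2 : 1 < T₂) :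
    max (Real.log (T₁ / (T₁ - 1))) (Real.log (T₂ / (T₂ - 1)))
      = Real.log (min T₁ T₂ / (min T₁ T₂ - 1)) := by
  have key : ∀ a b : ℝ, 1 < a → 1 < b → a ≤ b →
      Real.log (b / (b - 1)) ≤ Real.log (a / (a - 1)) := by
    intro a b ha hb hab
    apply Real.log_le_log (div_pos (by linarith) (by linarith))
    rw [div_le_div_iff₀ (by linarith) (by linarith)]
    nlinarith
  rcases le_total T₁ T₂ with h | h
  · rw [min_eq_left h, max_eq_left (key _ _ h1 h2 h)]
  · rw [min_eq_right h, max_eq_right (key _ _ h2 h1 h)]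

end aux

theorem funk_inter {n : ℕ} (Ω₁ Ω₂ : Set (EuclideanSpace ℝ (Fin n)))
    (h₁ : Convex ℝ Ω₁) (h₂ : Convex ℝ Ω₂)
    (ho₁ : IsOpen Ω₁) (ho₂ : IsOpen Ω₂)
    (x y : EuclideanSpace ℝ (Fin n)) (hx : x ∈ Ω₁ ∩ Ω₂) (hy : y ∈ Ω₁ ∩ Ω₂) :
    funk (Ω₁ ∩ Ω₂) x y = max (funk Ω₁ x y) (funk Ω₂ x y) := by
  obtain ⟨hx1, hx2⟩ := hx
  obtain ⟨hy1, hy2⟩ := hy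
  by_cases hxy : x = y
  · simp [funk, hxy]
  have hc : Convex ℝ (Ω₁ ∩ Ω₂) := h₁.inter h₂
  have ho : IsOpen (Ω₁ ∩ Ω₂) := ho₁.inter ho₂
  have hSeq : funkSet (Ω₁ ∩ Ω₂) x y = funkSet Ω₁ x y ∩ funkSet Ω₂ x y := rfl
  by_cases hb1 : BddAbove (funkSet Ω₁ x y) <;>
    by_cases hb2 : BddAbove (funkSet Ω₂ x y)
  · -- both bounded
    set T₁ := sSup (funkSet Ω₁ x y) with hT1
    set T₂ := sSup (funkSet Ω₂ x y) with hT2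
    have hT1gt : 1 < T₁ := one_lt_funkSup ho₁ hy1 hb1
    have hT2gt : 1 < T₂ := one_lt_funkSup ho₂ hy2 hb2
    have hbI : BddAbove (funkSet (Ω₁ ∩ Ω₂) x y) := by
      rw [hSeq]; exact hb1.mono Set.inter_subset_left
    have hsup : sSup (funkSet (Ω₁ ∩ Ω₂) x y) = min T₁ T₂ := by
      rw [hSeq]
      apply csSup_eq_of_bounds (lt_min (by linarith) (by linarith))
      · intro t ht
        exact le_min (le_csSup hb1 ht.1) (le_csSup hb2 ht.2)
      · intro t ht hlt
        exact ⟨funkSet_mem_of_lt h₁ hx1 hb1 ht (lt_of_lt_of_le hlt (min_le_left _ _)),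
          funkSet_mem_of_lt h₂ hx2 hb2 ht (lt_of_lt_of_le hlt (min_le_right _ _))⟩
    rw [funk_eq_log hc ho ⟨hx1, hx2⟩ ⟨hy1, hy2⟩ hxy hbI, hsup,
      funk_eq_log h₁ ho₁ hx1 hy1 hxy hb1, funk_eq_log h₂ ho₂ hx2 hy2 hxy hb2,
      max_log_div T₁ T₂ hT1gt hT2gt]
  · -- Ω₁ bounded, Ω₂ not
    have hray2 : ∀ t : ℝ, 0 ≤ t → x + t • (y - x) ∈ Ω₂ := (funk_ray_iff h₂ hx2).mpr hb2
    set T₁ := sSup (funkSet Ω₁ x y) with hT1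
    have hT1gt : 1 < T₁ := one_lt_funkSup ho₁ hy1 hb1
    have hbI : BddAbove (funkSet (Ω₁ ∩ Ω₂) x y) := by
      rw [hSeq]; exact hb1.mono Set.inter_subset_left
    have hsup : sSup (funkSet (Ω₁ ∩ Ω₂) x y) = T₁ := by
      rw [hSeq]
      apply csSup_eq_of_bounds (by linarith)
      · intro t ht
        exact le_csSup hb1 ht.1
      · intro t ht hlt
        exact ⟨funkSet_mem_of_lt h₁ hx1 hb1 ht hlt, hray2 t ht⟩
    rw [funk_eq_log hc ho ⟨hx1, hx2⟩ ⟨hy1, hy2⟩ hxy hbI, hsup,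
      funk_eq_log h₁ ho₁ hx1 hy1 hxy hb1, funk_zero_of_ray hray2]
    refine (max_eq_left ?_).symm
    apply Real.log_nonneg
    rw [le_div_iff₀ (by linarith)]
    linarith
  · -- Ω₂ bounded, Ω₁ not
    have hray1 : ∀ t : ℝ, 0 ≤ t → x + t • (y - x) ∈ Ω₁ := (funk_ray_iff h₁ hx1).mpr hb1
    set T₂ := sSup (funkSet Ω₂ x y) with hT2
    have hT2gt : 1 < T₂ := one_lt_funkSup ho₂ hy2 hb2
    have hbI : BddAbove (funkSet (Ω₁ ∩ Ω₂) x y) := by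
      rw [hSeq]; exact hb2.mono Set.inter_subset_right
    have hsup : sSup (funkSet (Ω₁ ∩ Ω₂) x y) = T₂ := by
      rw [hSeq]
      apply csSup_eq_of_bounds (by linarith)
      · intro t ht
        exact le_csSup hb2 ht.2
      · intro t ht hlt
        exact ⟨hray1 t ht, funkSet_mem_of_lt h₂ hx2 hb2 ht hlt⟩
    rw [funk_eq_log hc ho ⟨hx1, hx2⟩ ⟨hy1, hy2⟩ hxy hbI, hsup,
      funk_eq_log h₂ ho₂ hx2 hy2 hxy hb2, funk_zero_of_ray hray1]
    refine (max_eq_right ?_).symm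
    apply Real.log_nonneg
    rw [le_div_iff₀ (by linarith)]
    linarith
  · -- neither bounded
    have hray1 : ∀ t : ℝ, 0 ≤ t → x + t • (y - x) ∈ Ω₁ := (funk_ray_iff h₁ hx1).mpr hb1
    have hray2 : ∀ t : ℝ, 0 ≤ t → x + t • (y - x) ∈ Ω₂ := (funk_ray_iff h₂ hx2).mpr hb2
    rw [funk_zero_of_ray hray1, funk_zero_of_ray hray2,
      funk_zero_of_ray (fun t ht => Set.mem_inter (hray1 t ht) (hray2 t ht))]
    simp
end
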